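/- In ℝ⁴ identified with the Hamilton quaternions, the origami set M(U) with seed points {0,1} and direction set U = {1, i, (i−1)/√2, j, (j−1)/√2, (1+i+j+k)/2, (1−i−j−k)/2} equals the Hurwitz order ℤ + ℤi + ℤj + ℤ(1+i+j+k)/2. -/

import Mathlib

/-!
The Hurwitz order `L` is spanned by `1, i, j, h` with `h = (1+i+j+k)/2`, and each of the seven
directions is a real multiple of a primitive vector of `L`: `1, i, i-1, j, j-1, h, 1-h`.

`M(U) ⊆ L`: if `z = p + r α = q + s β` with `p, q ∈ L`, then `r α - s β = q - p ∈ L`. For any two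
distinct directions, some `2 × 2` minor of the coordinates of their primitive vectors is `±1`, so by
Cramer's rule `r α` is an integer multiple of a primitive vector, and `z = p + r α ∈ L`.

`L ⊆ M(U)`: translation by `v` maps `M(U)` into itself as soon as `v` and `1 + v` lie in `M(U)`,
since the construction commutes with translations. For `g ∈ {i, j, h}` the directions `1`, `g` and
one parallel to `g - 1` produce `±g`, `1 ± g`, `2` and `-1` in a few folds, so `M(U)` is
invariant under the translations by `±1, ±i, ±j, ±h`, and contains `L = L + 0`.
-/

noncomputable section

open scoped Quaternion

/-- The intersection point of the line through `p` with direction `α` and the line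
through `q` with direction `β`: `z` lies on both lines and is the unique such point. -/
def OrigamiInter {V : Type*} [AddCommGroup V] [Module ℝ V]
    (p q α β z : V) : Prop :=
  (∃ r s : ℝ, z = p + r • α ∧ z = q + s • β) ∧
  ∀ z', (∃ r s : ℝ, z' = p + r • α ∧ z' = q + s • β) → z' = z

/-- Iterated origami construction with seed points `{0, e}` and direction set `U`. -/
def Mseq {V : Type*} [AddCommGroup V] [Module ℝ V] (U : Set V) (e : V) : ℕ → Set V
  | 0 => {0, e}
  | k + 1 => {z | ∃ p ∈ Mseq U e k, ∃ q ∈ Mseq U e k, ∃ α ∈ U, ∃ β ∈ U,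
      OrigamiInter p q α β z}

/-- The origami set `M(U)` with seed points `{0, e}`. -/
def MU {V : Type*} [AddCommGroup V] [Module ℝ V] (U : Set V) (e : V) : Set V :=
  ⋃ k, Mseq U e k

/-- The first standard basis vector of `ℝⁿ`, playing the role of `1`. -/
def uno (n : ℕ) : EuclideanSpace ℝ (Fin (n + 1)) := EuclideanSpace.single 0 1

def qi : ℍ[ℝ] := ⟨0, 1, 0, 0⟩
def qj : ℍ[ℝ] := ⟨0, 0, 1, 0⟩
def qk : ℍ[ℝ] := ⟨0, 0, 0, 1⟩

/-- The Hurwitz element (1+i+j+k)/2. -/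
def hur : ℍ[ℝ] := (2 : ℝ)⁻¹ • (1 + qi + qj + qk)

open Module

section

variable {V : Type*} [AddCommGroup V]

namespace Origami

def translationSubgroup (S : Set V) : AddSubgroup V where
  carrier := {v | ∀ z ∈ S, z + v ∈ S ∧ z - v ∈ S}
  add_mem' {v w} hv hw z hz :=
    ⟨by simpa [add_assoc] using (hw _ (hv z hz).1).1,
      by simpa [sub_add_eq_sub_sub] using (hw _ (hv z hz).2).2⟩
  zero_mem' z hz := by simpa using hz
  neg_mem' {v} hv z hz := by simpa [sub_eq_add_neg, and_comm] using hv z hz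

theorem translationSubgroup_subset {S : Set V} (h0 : (0 : V) ∈ S) :
    (translationSubgroup S : Set V) ⊆ S :=
  fun v hv => by simpa using (hv 0 h0).1

end Origami

variable [Module ℝ V]

namespace OrigamiInter

variable {p q α β z : V}

theorem of_linearIndependent (hαβ : LinearIndependent ℝ ![α, β]) {r s : ℝ}
    (hp : z = p + r • α) (hq : z = q + s • β) : OrigamiInter p q α β z := by
  refine ⟨⟨r, s, hp, hq⟩, ?_⟩
  rintro z' ⟨r', s', hp', hq'⟩
  have hzero : (r' - r) • α + (s - s') • β = 0 := by
    calc (r' - r) • α + (s - s') • β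
        = (p + r' • α) - (p + r • α) + ((q + s • β) - (q + s' • β)) := by module
      _ = 0 := by rw [← hp, ← hp', ← hq, ← hq']; abel
  obtain ⟨hr, -⟩ := LinearIndependent.pair_iff.mp hαβ _ _ hzero
  rw [hp', hp, sub_eq_zero.mp hr]

theorem add_right (h : OrigamiInter p q α β z) (v : V) :
    OrigamiInter (p + v) (q + v) α β (z + v) := by
  obtain ⟨⟨r, s, hp, hq⟩, huniq⟩ := h
  refine ⟨⟨r, s, by rw [hp]; abel, by rw [hq]; abel⟩, ?_⟩
  rintro z' ⟨r', s', hp', hq'⟩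
  rw [← huniq (z' - v) ⟨r', s', by rw [hp']; abel, by rw [hq']; abel⟩, sub_add_cancel]

/-- Two lines with the same direction `α` share `z + α` with `z`, so the intersection can only be
unique when `α = 0`. -/
theorem eq_left_of_dir_eq (h : OrigamiInter p q α α z) : z = p := by
  obtain ⟨⟨r, s, hp, hq⟩, huniq⟩ := h
  have hα : α = 0 := by
    simpa using huniq (z + α) ⟨r + 1, s + 1, by rw [hp]; module, by rw [hq]; module⟩
  simpa [hα] using hp

end OrigamiInter

namespace Origami

/-- The points of `L` in the plane of `α` and `β` are sums of points of `L` on the two axes. -/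
def Splits (L : AddSubgroup V) (α β : V) : Prop :=
  ∀ x y : ℝ, x • α + y • β ∈ L → x • α ∈ L

theorem mem_of_splits {L : AddSubgroup V} {p q α β z : V} (hL : Splits L α β)
    (hp : p ∈ L) (hq : q ∈ L) (h : OrigamiInter p q α β z) : z ∈ L := by
  obtain ⟨⟨r, s, hzp, hzq⟩, -⟩ := h
  have hdiff : r • α + (-s) • β = q - p := by
    calc r • α + (-s) • β = (p + r • α) - (q + s • β) + q - p := by module
      _ = q - p := by rw [← hzp, ← hzq]; abel
  rw [hzp]
  exact L.add_mem hp (hL r (-s) (hdiff ▸ L.sub_mem hq hp))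

variable {U : Set V} {e : V}

theorem MU_subset_of_splits (L : AddSubgroup V) (he : e ∈ L)
    (hU : ∀ α ∈ U, ∀ β ∈ U, α ≠ β → Splits L α β) : MU U e ⊆ L := by
  refine Set.iUnion_subset fun k => ?_
  induction k with
  | zero => exact Set.insert_subset_iff.mpr ⟨L.zero_mem, Set.singleton_subset_iff.mpr he⟩
  | succ k ih =>
    rintro z ⟨p, hp, q, hq, α, hα, β, hβ, h⟩
    by_cases hαβ : α = β
    · subst hαβ
      rw [h.eq_left_of_dir_eq]
      exact ih hp
    · exact mem_of_splits (hU α hα β hβ hαβ) (ih hp) (ih hq) h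

/-- Cramer's rule: if the minor of `v` and `w` on the coordinates `k, l` is `1`, the coefficient
of the first vector is an integer combination of the `k`-th and `l`-th coordinates. -/
theorem splits_span_basis {ι : Type*} [Fintype ι] (B : Basis ι ℝ V) {v w : ι → ℤ} {k l : ι}
    (hvw : v k * w l - w k * v l = 1) (c d : ℝ) :
    Splits (Submodule.span ℤ (Set.range B)).toAddSubgroup
      (c • ∑ i, (v i : ℝ) • B i) (d • ∑ i, (w i : ℝ) • B i) := by
  intro x y hxy
  have hrepr : ∀ i, B.repr (x • c • ∑ i, (v i : ℝ) • B i + y • d • ∑ i, (w i : ℝ) • B i) i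
      = x * c * v i + y * d * w i := by
    intro i
    simp only [map_add, map_smul, Finsupp.coe_add, Finsupp.coe_smul, Pi.add_apply, Pi.smul_apply,
      B.repr_sum_self, smul_eq_mul, mul_assoc]
  obtain ⟨m, hm⟩ := (B.mem_span_iff_repr_mem ℤ _).mp hxy k
  obtain ⟨n, hn⟩ := (B.mem_span_iff_repr_mem ℤ _).mp hxy l
  rw [hrepr, eq_intCast] at hm hn
  have hx : x * c = ((m * w l - n * w k : ℤ) : ℝ) := by
    have hvw' : (v k : ℝ) * w l - w k * v l = 1 := by exact_mod_cast hvw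
    push_cast
    linear_combination -(w l : ℝ) * hm + (w k : ℝ) * hn - x * c * hvw'
  have hv : ∑ i, (v i : ℝ) • B i ∈ Submodule.span ℤ (Set.range B) := by
    refine Submodule.sum_mem _ fun i _ => ?_
    rw [Int.cast_smul_eq_zsmul]
    exact Submodule.smul_mem _ _ (Submodule.subset_span (Set.mem_range_self i))
  show x • c • ∑ i, (v i : ℝ) • B i ∈ Submodule.span ℤ (Set.range B)
  rw [smul_smul, hx, Int.cast_smul_eq_zsmul]
  exact Submodule.smul_mem _ _ hv

theorem MU_subset_span_basis {ι κ : Type*} [Fintype ι] (B : Basis ι ℝ V)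
    (D : κ → ι → ℤ) (c : κ → ℝ)
    (hD : ∀ s t, s ≠ t → ∃ k l, D s k * D t l - D t k * D s l = 1)
    (hU : U ⊆ Set.range fun t => c t • ∑ i, (D t i : ℝ) • B i)
    (he : e ∈ Submodule.span ℤ (Set.range B)) :
    MU U e ⊆ Submodule.span ℤ (Set.range B) := by
  refine MU_subset_of_splits (Submodule.span ℤ (Set.range B)).toAddSubgroup he ?_
  intro α hα β hβ hαβ
  obtain ⟨s, rfl⟩ := hU hα
  obtain ⟨t, rfl⟩ := hU hβ
  obtain ⟨k, l, hkl⟩ := hD s t (by rintro rfl; exact hαβ rfl)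
  exact splits_span_basis B hkl (c s) (c t)

theorem zero_mem_MU : (0 : V) ∈ MU U e := Set.mem_iUnion.mpr ⟨0, Or.inl rfl⟩

theorem self_mem_MU : e ∈ MU U e := Set.mem_iUnion.mpr ⟨0, Or.inr rfl⟩

theorem Mseq_monotone {α β : V} (hα : α ∈ U) (hβ : β ∈ U)
    (hαβ : LinearIndependent ℝ ![α, β]) : Monotone (Mseq U e) :=
  monotone_nat_of_le_succ fun _ p hp =>
    ⟨p, hp, p, hp, α, hα, β, hβ, .of_linearIndependent hαβ (r := 0) (s := 0) (by simp) (by simp)⟩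

theorem mem_MU_of_origamiInter (hU : ∃ α ∈ U, ∃ β ∈ U, LinearIndependent ℝ ![α, β])
    {p q α β z : V} (hp : p ∈ MU U e) (hq : q ∈ MU U e) (hα : α ∈ U) (hβ : β ∈ U)
    (h : OrigamiInter p q α β z) : z ∈ MU U e := by
  obtain ⟨α₀, hα₀, β₀, hβ₀, hind⟩ := hU
  have hmono := Mseq_monotone (e := e) hα₀ hβ₀ hind
  obtain ⟨kp, hkp⟩ := Set.mem_iUnion.mp hp
  obtain ⟨kq, hkq⟩ := Set.mem_iUnion.mp hq
  exact Set.mem_iUnion.mpr ⟨max kp kq + 1, p, hmono (le_max_left _ _) hkp,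
    q, hmono (le_max_right _ _) hkq, α, hα, β, hβ, h⟩

theorem add_mem_MU (hU : ∃ α ∈ U, ∃ β ∈ U, LinearIndependent ℝ ![α, β]) {v : V}
    (hv : v ∈ MU U e) (hev : e + v ∈ MU U e) {z : V} (hz : z ∈ MU U e) : z + v ∈ MU U e := by
  obtain ⟨k, hk⟩ := Set.mem_iUnion.mp hz
  induction k generalizing z with
  | zero =>
    rcases hk with rfl | rfl
    · simpa using hv
    · exact hev
  | succ k ih =>
    obtain ⟨p, hp, q, hq, α, hα, β, hβ, h⟩ := hk
    exact mem_MU_of_origamiInter hU (ih (Set.mem_iUnion.mpr ⟨k, hp⟩) hp)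
      (ih (Set.mem_iUnion.mpr ⟨k, hq⟩) hq) hα hβ (h.add_right v)

theorem mem_translationSubgroup_MU (hU : ∃ α ∈ U, ∃ β ∈ U, LinearIndependent ℝ ![α, β])
    {v : V} (hv : v ∈ MU U e) (hev : e + v ∈ MU U e) (hnv : -v ∈ MU U e)
    (henv : e - v ∈ MU U e) : v ∈ translationSubgroup (MU U e) := by
  intro z hz
  refine ⟨add_mem_MU hU hv hev hz, ?_⟩
  rw [sub_eq_add_neg] at henv ⊢
  exact add_mem_MU hU hnv henv hz

theorem mem_translationSubgroup_MU_of_dirs {g δ : V} {c : ℝ} (he : e ∈ U) (hg : g ∈ U)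
    (hδ : δ ∈ U) (hgδ : g = e + c • δ) (heg : LinearIndependent ℝ ![e, g]) :
    e ∈ translationSubgroup (MU U e) ∧ g ∈ translationSubgroup (MU U e) := by
  have heδ : LinearIndependent ℝ ![e, δ] :=
    ((LinearIndependent.pair_add_smul_add_smul_iff (x := e) (y := δ) 1 0 1 c).mp
      (by simpa [hgδ] using heg)).1
  have hge : LinearIndependent ℝ ![g, e] := LinearIndependent.pair_symm_iff.mp heg
  have hgδ' : LinearIndependent ℝ ![g, δ] := by
    rw [hgδ]
    exact (LinearIndependent.pair_add_smul_left_iff (b := c)).mpr heδ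
  have hU : ∃ α ∈ U, ∃ β ∈ U, LinearIndependent ℝ ![α, β] := ⟨e, he, g, hg, heg⟩
  have h0 : (0 : V) ∈ MU U e := zero_mem_MU
  have h1 : e ∈ MU U e := self_mem_MU
  subst hgδ
  have hg' : e + c • δ ∈ MU U e := mem_MU_of_origamiInter hU h0 h1 hg hδ
    (.of_linearIndependent hgδ' (r := 1) (s := c) (by module) rfl)
  have heng : e - (e + c • δ) ∈ MU U e := mem_MU_of_origamiInter hU h1 h0 hg hδ
    (.of_linearIndependent hgδ' (r := -1) (s := -c) (by module) (by module))
  have hepg : e + (e + c • δ) ∈ MU U e := mem_MU_of_origamiInter hU hg' h1 he hg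
    (.of_linearIndependent heg (r := 1) (s := 1) (by module) (by module))
  have hng : -(e + c • δ) ∈ MU U e := mem_MU_of_origamiInter hU h0 heng hg he
    (.of_linearIndependent hge (r := -1) (s := -1) (by module) (by module))
  have hepe : e + e ∈ MU U e := mem_MU_of_origamiInter hU h1 hepg he hδ
    (.of_linearIndependent heδ (r := 1) (s := -c) (by module) (by module))
  have hne : -e ∈ MU U e := mem_MU_of_origamiInter hU h0 hng he hδ
    (.of_linearIndependent heδ (r := -1) (s := c) (by module) (by module))
  exact ⟨mem_translationSubgroup_MU hU h1 hepe hne (by simpa using h0),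
    mem_translationSubgroup_MU hU hg' hepg hng heng⟩

end Origami

end

namespace HurwitzOrigami

open Origami

def directions : Set ℍ[ℝ] :=
  {1, qi, (Real.sqrt 2)⁻¹ • (qi - 1), qj, (Real.sqrt 2)⁻¹ • (qj - 1), hur,
    (2 : ℝ)⁻¹ • (1 - qi - qj - qk)}

theorem linearIndependent_basis : LinearIndependent ℝ ![1, qi, qj, hur] := by
  rw [Fintype.linearIndependent_iff]
  intro g hg
  have hcoord := Quaternion.ext_iff.mp hg
  simp only [hur, smul_add, Fin.sum_univ_four, Matrix.cons_val_zero, Matrix.cons_val_one,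
    Matrix.cons_val, Quaternion.re_add, Quaternion.re_smul, Quaternion.re_one, smul_eq_mul,
    Quaternion.imI_add, Quaternion.imI_smul, Quaternion.imI_one, Quaternion.imJ_add,
    Quaternion.imJ_smul, Quaternion.imJ_one, Quaternion.imK_add, Quaternion.imK_smul,
    Quaternion.imK_one, Quaternion.re_zero, Quaternion.imI_zero, Quaternion.imJ_zero,
    Quaternion.imK_zero] at hcoord
  simp only [qi, qj, qk] at hcoord
  obtain ⟨h0, h1, h2, h3⟩ := hcoord
  intro i
  fin_cases i <;> simp only [Fin.zero_eta, Fin.mk_one, Fin.reduceFinMk] <;> linarith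

def basis : Basis (Fin 4) ℝ ℍ[ℝ] :=
  basisOfLinearIndependentOfCardEqFinrank linearIndependent_basis
    (by simp [Quaternion.finrank_eq_four])

theorem coe_basis : ⇑basis = ![1, qi, qj, hur] :=
  coe_basisOfLinearIndependentOfCardEqFinrank _ _

theorem mem_span_basis_iff {z : ℍ[ℝ]} : z ∈ Submodule.span ℤ (Set.range basis) ↔
    ∃ a b c d : ℤ, z = (a : ℝ) • 1 + (b : ℝ) • qi + (c : ℝ) • qj + (d : ℝ) • hur := by
  simp only [Submodule.mem_span_range_iff_exists_fun, coe_basis, Fin.sum_univ_four,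
    Int.cast_smul_eq_zsmul]
  constructor
  · rintro ⟨c, rfl⟩
    exact ⟨c 0, c 1, c 2, c 3, by simp⟩
  · rintro ⟨a, b, c, d, rfl⟩
    exact ⟨![a, b, c, d], by simp⟩

theorem linearIndependent_one_basis {k : Fin 4} (hk : k ≠ 0) :
    LinearIndependent ℝ ![1, basis k] := by
  have hinj : Function.Injective ![(0 : Fin 4), k] := by
    intro a b hab
    fin_cases a <;> fin_cases b <;> simp_all [eq_comm]
  convert basis.linearIndependent.comp _ hinj using 1
  funext i
  fin_cases i <;> simp [coe_basis]

theorem span_basis_subset_MU :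
    (Submodule.span ℤ (Set.range basis) : Set ℍ[ℝ]) ⊆ MU directions 1 := by
  have hsqrt : Real.sqrt 2 ≠ 0 := by positivity
  have hone : (1 : ℍ[ℝ]) ∈ directions := by simp [directions]
  obtain ⟨h1, hi⟩ := mem_translationSubgroup_MU_of_dirs (g := basis 1)
    (δ := (Real.sqrt 2)⁻¹ • (qi - 1)) (c := Real.sqrt 2) hone (by simp [coe_basis, directions])
    (by simp [directions]) (by simp [coe_basis, smul_smul, hsqrt])
    (linearIndependent_one_basis (by decide))
  obtain ⟨-, hj⟩ := mem_translationSubgroup_MU_of_dirs (g := basis 2)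
    (δ := (Real.sqrt 2)⁻¹ • (qj - 1)) (c := Real.sqrt 2) hone (by simp [coe_basis, directions])
    (by simp [directions]) (by simp [coe_basis, smul_smul, hsqrt])
    (linearIndependent_one_basis (by decide))
  obtain ⟨-, hh⟩ := mem_translationSubgroup_MU_of_dirs (g := basis 3)
    (δ := (2 : ℝ)⁻¹ • (1 - qi - qj - qk)) (c := -1) hone (by simp [coe_basis, directions])
    (by simp [directions]) (by simp only [coe_basis, Matrix.cons_val, hur]; module)
    (linearIndependent_one_basis (by decide))
  have hle : (Submodule.span ℤ (Set.range basis)).toAddSubgroup ≤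
      translationSubgroup (MU directions 1) := by
    rw [Submodule.span_int_eq_addSubgroupClosure, AddSubgroup.closure_le, Set.range_subset_iff]
    intro k
    fin_cases k
    exacts [by simpa [coe_basis] using h1, hi, hj, hh]
  exact fun z hz => translationSubgroup_subset zero_mem_MU (hle hz)

/-- Coordinates in `basis` of the primitive lattice vectors `1, i, i-1, j, j-1, h, 1-h` along the
seven directions. -/
def directionCoords : Fin 7 → Fin 4 → ℤ :=
  ![![1, 0, 0, 0], ![0, 1, 0, 0], ![-1, 1, 0, 0], ![0, 0, 1, 0], ![-1, 0, 1, 0], ![0, 0, 0, 1],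
    ![1, 0, 0, -1]]

theorem directionCoords_minor (s t : Fin 7) (hst : s ≠ t) : ∃ k l,
    directionCoords s k * directionCoords t l - directionCoords t k * directionCoords s l = 1 := by
  revert s t
  decide

theorem directions_subset : directions ⊆ Set.range fun t =>
    ![1, 1, (Real.sqrt 2)⁻¹, 1, (Real.sqrt 2)⁻¹, 1, 1] t •
      ∑ i, (directionCoords t i : ℝ) • basis i := by
  simp only [directions, Set.insert_subset_iff, Set.singleton_subset_iff, Set.mem_range]
  refine ⟨⟨0, ?_⟩, ⟨1, ?_⟩, ⟨2, ?_⟩, ⟨3, ?_⟩, ⟨4, ?_⟩, ⟨5, ?_⟩, ⟨6, ?_⟩⟩ <;>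
    simp only [coe_basis, directionCoords, Fin.sum_univ_four, Matrix.cons_val, Matrix.cons_val_zero,
      Matrix.cons_val_one, Int.cast_zero, Int.cast_one, Int.cast_neg, hur] <;> module

end HurwitzOrigami

theorem stmt14 :
    MU ({1, qi, (Real.sqrt 2)⁻¹ • (qi - 1), qj, (Real.sqrt 2)⁻¹ • (qj - 1),
        hur, (2 : ℝ)⁻¹ • (1 - qi - qj - qk)} : Set ℍ[ℝ]) 1 =
      {z : ℍ[ℝ] | ∃ a b c d : ℤ,
        z = (a : ℝ) • 1 + (b : ℝ) • qi + (c : ℝ) • qj + (d : ℝ) • hur} := by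
  have hL : {z : ℍ[ℝ] | ∃ a b c d : ℤ,
      z = (a : ℝ) • 1 + (b : ℝ) • qi + (c : ℝ) • qj + (d : ℝ) • hur} =
      Submodule.span ℤ (Set.range HurwitzOrigami.basis) :=
    Set.ext fun _ => HurwitzOrigami.mem_span_basis_iff.symm
  rw [hL]
  exact subset_antisymm
    (Origami.MU_subset_span_basis HurwitzOrigami.basis _ _ HurwitzOrigami.directionCoords_minor
      HurwitzOrigami.directions_subset
      (Submodule.subset_span ⟨0, by simp [HurwitzOrigami.coe_basis]⟩))
    HurwitzOrigami.span_basis_subset_MU
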